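/- For any positive masses m₁, m₂, m₃, m₄, the set 𝓜⁺ = {r ∈ [0,∞)⁶ : I(r) = 1 and P(r) = 0} is contractible. -/
import Mathlib


/-- The Ptolemy function `P` as a function of
`r = (r₁₂, r₁₃, r₁₄, r₂₃, r₂₄, r₃₄) ∈ ℝ⁶`. -/
def Pvec (r : Fin 6 → ℝ) : ℝ :=
  r 0 * r 5 + r 2 * r 3 - r 1 * r 4

/-- The moment of inertia `I` as a function of `r ∈ ℝ⁶`. -/
noncomputable def Ivec (m1 m2 m3 m4 : ℝ) (r : Fin 6 → ℝ) : ℝ :=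
  (1/(2*(m1 + m2 + m3 + m4))) *
    (m1*m2*(r 0)^2 + m1*m3*(r 1)^2 + m1*m4*(r 2)^2 +
     m2*m3*(r 3)^2 + m2*m4*(r 4)^2 + m3*m4*(r 5)^2)

/-- The set `𝓜⁺ = {r ∈ [0,∞)⁶ : I(r) = 1, P(r) = 0}`. -/
noncomputable def setMplus (m1 m2 m3 m4 : ℝ) : Set (Fin 6 → ℝ) :=
  {r | (∀ i, 0 ≤ r i) ∧ Ivec m1 m2 m3 m4 r = 1 ∧ Pvec r = 0}

/- Auxiliary definitions for the contraction. -/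

noncomputable def wa (t : ℝ) (r : Fin 6 → ℝ) : ℝ := (1-t) * r 0 + t
noncomputable def wb (t : ℝ) (r : Fin 6 → ℝ) : ℝ := (1-t) * r 2 + t
noncomputable def wc (t : ℝ) (r : Fin 6 → ℝ) : ℝ := (1-t) * r 3 + t
noncomputable def wd (t : ℝ) (r : Fin 6 → ℝ) : ℝ := (1-t) * r 5 + t
noncomputable def ww (t : ℝ) (r : Fin 6 → ℝ) : ℝ := (1-t) * (r 1 - r 4)
noncomputable def ws (t : ℝ) (r : Fin 6 → ℝ) : ℝ :=
  wa t r * wd t r + wb t r * wc t r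
noncomputable def wR (t : ℝ) (r : Fin 6 → ℝ) : ℝ :=
  Real.sqrt (ww t r ^ 2 + 4 * ws t r)

/-- The (unnormalized) contraction path in the cone `{r ≥ 0, P r = 0}`. -/
noncomputable def wline (t : ℝ) (r : Fin 6 → ℝ) : Fin 6 → ℝ :=
  ![wa t r, (wR t r + ww t r)/2, wb t r, wc t r, (wR t r - ww t r)/2, wd t r]


lemma wline_0 (t : ℝ) (r : Fin 6 → ℝ) : wline t r 0 = wa t r := by
  simp [wline]
lemma wline_1 (t : ℝ) (r : Fin 6 → ℝ) : wline t r 1 = (wR t r + ww t r)/2 := by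
  simp [wline]
lemma wline_2 (t : ℝ) (r : Fin 6 → ℝ) : wline t r 2 = wb t r := by
  simp [wline, Matrix.cons_val_succ]
lemma wline_3 (t : ℝ) (r : Fin 6 → ℝ) : wline t r 3 = wc t r := by
  simp [wline, Matrix.cons_val_succ]
lemma wline_4 (t : ℝ) (r : Fin 6 → ℝ) : wline t r 4 = (wR t r - ww t r)/2 := by
  simp [wline, Matrix.cons_val_succ]
lemma wline_5 (t : ℝ) (r : Fin 6 → ℝ) : wline t r 5 = wd t r := rfl

lemma wa_nonneg {t : ℝ} (ht0 : 0 ≤ t) (ht1 : t ≤ 1) {r : Fin 6 → ℝ}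
    (hr : ∀ i, 0 ≤ r i) : 0 ≤ wa t r := by
  have := hr 0; unfold wa; nlinarith

lemma wb_nonneg {t : ℝ} (ht0 : 0 ≤ t) (ht1 : t ≤ 1) {r : Fin 6 → ℝ}
    (hr : ∀ i, 0 ≤ r i) : 0 ≤ wb t r := by
  have := hr 2; unfold wb; nlinarith

lemma wc_nonneg {t : ℝ} (ht0 : 0 ≤ t) (ht1 : t ≤ 1) {r : Fin 6 → ℝ}
    (hr : ∀ i, 0 ≤ r i) : 0 ≤ wc t r := by
  have := hr 3; unfold wc; nlinarith

lemma wd_nonneg {t : ℝ} (ht0 : 0 ≤ t) (ht1 : t ≤ 1) {r : Fin 6 → ℝ}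
    (hr : ∀ i, 0 ≤ r i) : 0 ≤ wd t r := by
  have := hr 5; unfold wd; nlinarith

lemma ws_nonneg {t : ℝ} (ht0 : 0 ≤ t) (ht1 : t ≤ 1) {r : Fin 6 → ℝ}
    (hr : ∀ i, 0 ≤ r i) : 0 ≤ ws t r :=
  add_nonneg (mul_nonneg (wa_nonneg ht0 ht1 hr) (wd_nonneg ht0 ht1 hr))
    (mul_nonneg (wb_nonneg ht0 ht1 hr) (wc_nonneg ht0 ht1 hr))

lemma wR_sq {t : ℝ} (ht0 : 0 ≤ t) (ht1 : t ≤ 1) {r : Fin 6 → ℝ}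
    (hr : ∀ i, 0 ≤ r i) : wR t r ^ 2 = ww t r ^ 2 + 4 * ws t r := by
  have hs := ws_nonneg ht0 ht1 hr
  exact Real.sq_sqrt (by positivity)

lemma wR_ge_abs {t : ℝ} (ht0 : 0 ≤ t) (ht1 : t ≤ 1) {r : Fin 6 → ℝ}
    (hr : ∀ i, 0 ≤ r i) : |ww t r| ≤ wR t r := by
  have hs := ws_nonneg ht0 ht1 hr
  have h1 : ww t r ^ 2 ≤ ww t r ^ 2 + 4 * ws t r := by linarith
  calc |ww t r| = Real.sqrt (ww t r ^ 2) := (Real.sqrt_sq_eq_abs _).symm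
    _ ≤ wR t r := Real.sqrt_le_sqrt h1

lemma wline_nonneg {t : ℝ} (ht0 : 0 ≤ t) (ht1 : t ≤ 1) {r : Fin 6 → ℝ}
    (hr : ∀ i, 0 ≤ r i) : ∀ i, 0 ≤ wline t r i := by
  have habs := wR_ge_abs ht0 ht1 hr
  have h1 : -ww t r ≤ wR t r := le_trans (neg_le_abs _) habs
  have h2 : ww t r ≤ wR t r := le_trans (le_abs_self _) habs
  intro i
  fin_cases i
  · rw [show ((⟨0, by norm_num⟩ : Fin 6)) = 0 from rfl, wline_0]
    exact wa_nonneg ht0 ht1 hr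
  · rw [show ((⟨1, by norm_num⟩ : Fin 6)) = 1 from rfl, wline_1]; linarith
  · rw [show ((⟨2, by norm_num⟩ : Fin 6)) = 2 from rfl, wline_2]
    exact wb_nonneg ht0 ht1 hr
  · rw [show ((⟨3, by norm_num⟩ : Fin 6)) = 3 from rfl, wline_3]
    exact wc_nonneg ht0 ht1 hr
  · rw [show ((⟨4, by norm_num⟩ : Fin 6)) = 4 from rfl, wline_4]; linarith
  · rw [show ((⟨5, by norm_num⟩ : Fin 6)) = 5 from rfl, wline_5]
    exact wd_nonneg ht0 ht1 hr

lemma Pvec_wline {t : ℝ} (ht0 : 0 ≤ t) (ht1 : t ≤ 1) {r : Fin 6 → ℝ}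
    (hr : ∀ i, 0 ≤ r i) : Pvec (wline t r) = 0 := by
  have hR2 := wR_sq ht0 ht1 hr
  rw [Pvec, wline_0, wline_1, wline_2, wline_3, wline_4, wline_5]
  unfold ws at hR2
  linear_combination (-(1:ℝ)/4) * hR2

lemma wline_zero {r : Fin 6 → ℝ} (hr : ∀ i, 0 ≤ r i) (hP : Pvec r = 0) :
    wline 0 r = r := by
  have hs : ws 0 r = r 1 * r 4 := by
    unfold ws wa wb wc wd
    unfold Pvec at hP
    nlinarith [hP]
  have harg : ww 0 r ^ 2 + 4 * ws 0 r = (r 1 + r 4)^2 := by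
    rw [hs]; unfold ww; ring
  have hR : wR 0 r = r 1 + r 4 := by
    rw [wR, harg, Real.sqrt_sq (by have := hr 1; have := hr 4; linarith)]
  funext i
  fin_cases i
  · rw [show ((⟨0, by norm_num⟩ : Fin 6)) = 0 from rfl, wline_0]; unfold wa; ring
  · rw [show ((⟨1, by norm_num⟩ : Fin 6)) = 1 from rfl, wline_1, hR]; unfold ww; ring
  · rw [show ((⟨2, by norm_num⟩ : Fin 6)) = 2 from rfl, wline_2]; unfold wb; ring
  · rw [show ((⟨3, by norm_num⟩ : Fin 6)) = 3 from rfl, wline_3]; unfold wc; ring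
  · rw [show ((⟨4, by norm_num⟩ : Fin 6)) = 4 from rfl, wline_4, hR]; unfold ww; ring
  · rw [show ((⟨5, by norm_num⟩ : Fin 6)) = 5 from rfl, wline_5]; unfold wd; ring

lemma wline_one (r : Fin 6 → ℝ) :
    wline 1 r = ![1, Real.sqrt 8 / 2, 1, 1, Real.sqrt 8 / 2, 1] := by
  have ha : wa 1 r = 1 := by unfold wa; ring
  have hb : wb 1 r = 1 := by unfold wb; ring
  have hc : wc 1 r = 1 := by unfold wc; ring
  have hd : wd 1 r = 1 := by unfold wd; ring
  have hw : ww 1 r = 0 := by unfold ww; ring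
  have hs : ws 1 r = 2 := by unfold ws; rw [ha, hb, hc, hd]; ring
  have hR : wR 1 r = Real.sqrt 8 := by rw [wR, hw, hs]; norm_num
  funext i
  fin_cases i
  · rw [show ((⟨0, by norm_num⟩ : Fin 6)) = 0 from rfl, wline_0, ha]
    norm_num
  · rw [show ((⟨1, by norm_num⟩ : Fin 6)) = 1 from rfl, wline_1, hR, hw]
    norm_num
  · rw [show ((⟨2, by norm_num⟩ : Fin 6)) = 2 from rfl, wline_2, hb]
    simp [Matrix.cons_val_succ]
  · rw [show ((⟨3, by norm_num⟩ : Fin 6)) = 3 from rfl, wline_3, hc]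
    simp [Matrix.cons_val_succ]
  · rw [show ((⟨4, by norm_num⟩ : Fin 6)) = 4 from rfl, wline_4, hR, hw]
    simp [Matrix.cons_val_succ]
  · rw [show ((⟨5, by norm_num⟩ : Fin 6)) = 5 from rfl, wline_5, hd]
    exact (rfl : (1:ℝ) = ![1, Real.sqrt 8 / 2, 1, 1, Real.sqrt 8 / 2, 1] 5).symm ▸ rfl

lemma Ivec_pos {m1 m2 m3 m4 : ℝ} (hm1 : 0 < m1) (hm2 : 0 < m2) (hm3 : 0 < m3)
    (hm4 : 0 < m4) {v : Fin 6 → ℝ} (hv : ∀ i, 0 ≤ v i) (h0 : 0 < v 0) :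
    0 < Ivec m1 m2 m3 m4 v := by
  unfold Ivec
  have hM : 0 < 1/(2*(m1 + m2 + m3 + m4)) := by positivity
  apply mul_pos hM
  have t1 : 0 < m1*m2*(v 0)^2 := by positivity
  have t2 : 0 ≤ m1*m3*(v 1)^2 := by positivity
  have t3 : 0 ≤ m1*m4*(v 2)^2 := by positivity
  have t4 : 0 ≤ m2*m3*(v 3)^2 := by positivity
  have t5 : 0 ≤ m2*m4*(v 4)^2 := by positivity
  have t6 : 0 ≤ m3*m4*(v 5)^2 := by positivity
  linarith

lemma Ivec_div (m1 m2 m3 m4 c : ℝ) (v : Fin 6 → ℝ) :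
    Ivec m1 m2 m3 m4 (fun i => v i / c) = Ivec m1 m2 m3 m4 v / c^2 := by
  simp only [Ivec]; ring

lemma Pvec_div (c : ℝ) (v : Fin 6 → ℝ) :
    Pvec (fun i => v i / c) = Pvec v / c^2 := by
  simp only [Pvec]; ring

lemma wline_cont : Continuous (fun p : ℝ × (Fin 6 → ℝ) => wline p.1 p.2) := by
  have hR : Continuous (fun p : ℝ × (Fin 6 → ℝ) => wR p.1 p.2) := by
    unfold wR ws ww wa wb wc wd; fun_prop
  apply continuous_pi
  intro i
  fin_cases i
  · simp only [show ((⟨0, by norm_num⟩ : Fin 6)) = 0 from rfl, wline_0]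
    unfold wa; fun_prop
  · simp only [show ((⟨1, by norm_num⟩ : Fin 6)) = 1 from rfl, wline_1]
    refine Continuous.div_const (hR.add ?_) 2
    unfold ww; fun_prop
  · simp only [show ((⟨2, by norm_num⟩ : Fin 6)) = 2 from rfl, wline_2]
    unfold wb; fun_prop
  · simp only [show ((⟨3, by norm_num⟩ : Fin 6)) = 3 from rfl, wline_3]
    unfold wc; fun_prop
  · simp only [show ((⟨4, by norm_num⟩ : Fin 6)) = 4 from rfl, wline_4]
    refine Continuous.div_const (hR.sub ?_) 2
    unfold ww; fun_prop
  · simp only [show ((⟨5, by norm_num⟩ : Fin 6)) = 5 from rfl, wline_5]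
    unfold wd; fun_prop

lemma Ivec_cont (m1 m2 m3 m4 : ℝ) : Continuous (Ivec m1 m2 m3 m4) := by
  unfold Ivec; fun_prop

/-- For positive masses, the set `𝓜⁺` is contractible. -/
theorem setMplus_contractible (m1 m2 m3 m4 : ℝ)
    (hm1 : 0 < m1) (hm2 : 0 < m2) (hm3 : 0 < m3) (hm4 : 0 < m4) :
    ContractibleSpace ↥(setMplus m1 m2 m3 m4) := by
  classical
  rw [contractible_iff_id_nullhomotopic]
  -- positivity of the moment of inertia along the contraction
  have key : ∀ (t : ℝ) (r : Fin 6 → ℝ), 0 ≤ t → t ≤ 1 → r ∈ setMplus m1 m2 m3 m4 →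
      0 < Ivec m1 m2 m3 m4 (wline t r) := by
    intro t r ht0 ht1 hr
    rcases eq_or_lt_of_le ht0 with h | h
    · rw [← h, wline_zero hr.1 hr.2.2, hr.2.1]; norm_num
    · refine Ivec_pos hm1 hm2 hm3 hm4 (wline_nonneg ht0 ht1 hr.1) ?_
      rw [wline_0]
      have := hr.1 0
      unfold wa; nlinarith
  -- the normalized map
  set F : ℝ × (Fin 6 → ℝ) → (Fin 6 → ℝ) := fun p i =>
    wline p.1 p.2 i / Real.sqrt (Ivec m1 m2 m3 m4 (wline p.1 p.2)) with hF
  have hFmem : ∀ (t : ℝ) (r : Fin 6 → ℝ), 0 ≤ t → t ≤ 1 → (∀ i, 0 ≤ r i) →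
      0 < Ivec m1 m2 m3 m4 (wline t r) → F (t, r) ∈ setMplus m1 m2 m3 m4 := by
    intro t r ht0 ht1 hrn hpos
    have hc : 0 < Real.sqrt (Ivec m1 m2 m3 m4 (wline t r)) := Real.sqrt_pos.2 hpos
    have hc2 : Real.sqrt (Ivec m1 m2 m3 m4 (wline t r)) ^ 2 = Ivec m1 m2 m3 m4 (wline t r) :=
      Real.sq_sqrt hpos.le
    refine ⟨fun i => div_nonneg (wline_nonneg ht0 ht1 hrn i) hc.le, ?_, ?_⟩
    · show Ivec m1 m2 m3 m4 (fun i => wline t r i / _) = 1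
      rw [Ivec_div, hc2, div_self (ne_of_gt hpos)]
    · show Pvec (fun i => wline t r i / _) = 0
      rw [Pvec_div, Pvec_wline ht0 ht1 hrn, zero_div]
  -- the contraction point
  have hzn : ∀ i, (0:ℝ) ≤ (fun _ : Fin 6 => (0:ℝ)) i := fun _ => le_refl 0
  have hpos1 : 0 < Ivec m1 m2 m3 m4 (wline 1 (fun _ => 0)) := by
    refine Ivec_pos hm1 hm2 hm3 hm4 (wline_nonneg zero_le_one le_rfl hzn) ?_
    rw [wline_one]
    simp
  have hptmem : F (1, fun _ => 0) ∈ setMplus m1 m2 m3 m4 :=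
    hFmem 1 (fun _ => 0) zero_le_one le_rfl hzn hpos1
  refine ⟨⟨F (1, fun _ => 0), hptmem⟩, ?_⟩
  constructor
  refine
    { toFun := fun p => ⟨F ((p.1 : ℝ), (p.2 : Fin 6 → ℝ)),
        hFmem p.1 p.2 p.1.2.1 p.1.2.2 p.2.2.1
          (key p.1 p.2 p.1.2.1 p.1.2.2 p.2.2)⟩
      continuous_toFun := ?_
      map_zero_left := ?_
      map_one_left := ?_ }
  · apply Continuous.subtype_mk
    have h1 : Continuous fun p : unitInterval × ↥(setMplus m1 m2 m3 m4) =>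
        (((p.1 : ℝ), (p.2 : Fin 6 → ℝ)) : ℝ × (Fin 6 → ℝ)) :=
      (continuous_subtype_val.comp continuous_fst).prodMk
        (continuous_subtype_val.comp continuous_snd)
    have hw : Continuous fun p : unitInterval × ↥(setMplus m1 m2 m3 m4) =>
        wline (p.1 : ℝ) (p.2 : Fin 6 → ℝ) := wline_cont.comp h1
    have hI : Continuous fun p : unitInterval × ↥(setMplus m1 m2 m3 m4) =>
        Ivec m1 m2 m3 m4 (wline (p.1 : ℝ) (p.2 : Fin 6 → ℝ)) :=
      (Ivec_cont m1 m2 m3 m4).comp hw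
    apply continuous_pi
    intro i
    exact ((continuous_apply i).comp hw).div hI.sqrt
      (fun p => ne_of_gt (Real.sqrt_pos.2 (key p.1 p.2 p.1.2.1 p.1.2.2 p.2.2)))
  · intro x
    apply Subtype.ext
    show F ((0:ℝ), (x : Fin 6 → ℝ)) = (x : Fin 6 → ℝ)
    have hx := x.2
    have hw0 : wline 0 (x : Fin 6 → ℝ) = (x : Fin 6 → ℝ) := wline_zero hx.1 hx.2.2
    funext i
    simp only [hF, hw0, hx.2.1, Real.sqrt_one, div_one]
  · intro x
    apply Subtype.ext
    show F ((1:ℝ), (x : Fin 6 → ℝ)) = F (1, fun _ => 0)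
    simp only [hF, wline_one]
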